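/- The function f(x) = ((K+1)e^{-K}/λ) · e^{-(K+1)x/λ} · I₀(2√(K(K+1)x/λ)) on [0,∞) is a valid probability density: it is nonnegative and ∫₀^∞ f(x) dx = 1. -/

import Mathlib

open Real MeasureTheory

/-- The zero-th order modified Bessel function of the first kind. -/
noncomputable def besselI0 (z : ℝ) : ℝ :=
  ∑' l : ℕ, (z / 2) ^ (2 * l) / ((Nat.factorial l : ℝ)) ^ 2

/-- The Rician channel-gain density. -/
noncomputable def ricianPDF (K lam x : ℝ) : ℝ :=
  ((K + 1) * Real.exp (-K) / lam) * Real.exp (-(K + 1) * x / lam) *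
    besselI0 (2 * Real.sqrt (K * (K + 1) * x / lam))

/-!
Substituting `u = (K + 1) x / λ` turns the integral into `e^{-K}` times
`∫₀^∞ e^{-u} I₀(2√(K u)) du`. Expanding `I₀(2√(K u)) = ∑ (K u)^l / (l!)²` and integrating
term by term with `∫₀^∞ e^{-u} u^l du = l!` gives `∑ K^l / l! = e^K`.
-/

open Set Nat

lemma besselI0_nonneg (z : ℝ) : 0 ≤ besselI0 z :=
  tsum_nonneg fun l => by rw [pow_mul]; positivity

lemma besselI0_two_mul_sqrt {z : ℝ} (hz : 0 ≤ z) :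
    besselI0 (2 * √z) = ∑' l : ℕ, z ^ l / (l ! : ℝ) ^ 2 := by
  simp only [besselI0, mul_div_cancel_left₀ √z (two_ne_zero' ℝ), pow_mul, sq_sqrt hz]

lemma ricianPDF_nonneg {K lam : ℝ} (hK : 0 ≤ K + 1) (hlam : 0 ≤ lam) (x : ℝ) :
    0 ≤ ricianPDF K lam x := by
  have := besselI0_nonneg (2 * √(K * (K + 1) * x / lam))
  unfold ricianPDF
  positivity

lemma integrableOn_exp_neg_mul_pow_Ioi (l : ℕ) :
    IntegrableOn (fun u : ℝ => exp (-u) * u ^ l) (Ioi 0) := by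
  simpa [← rpow_natCast] using GammaIntegral_convergent (s := l + 1) (by positivity)

lemma integral_exp_neg_mul_pow_Ioi (l : ℕ) :
    ∫ u in Ioi (0 : ℝ), exp (-u) * u ^ l = l ! := by
  rw [← Real.Gamma_nat_eq_factorial, Real.Gamma_eq_integral (by positivity)]
  simp [← rpow_natCast]

lemma integral_exp_neg_mul_besselI0_two_mul_sqrt {K : ℝ} (hK : 0 ≤ K) :
    ∫ u in Ioi (0 : ℝ), exp (-u) * besselI0 (2 * √(K * u)) = exp K := by
  set F : ℕ → ℝ → ℝ := fun l u => K ^ l / (l ! : ℝ) ^ 2 * (exp (-u) * u ^ l)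
  have hF_nonneg : ∀ l, ∀ u ∈ Ioi (0 : ℝ), 0 ≤ F l u := fun l u (hu : 0 < u) => by positivity
  have hF_integral : ∀ l, ∫ u in Ioi (0 : ℝ), F l u = K ^ l / l ! := fun l => by
    rw [integral_const_mul, integral_exp_neg_mul_pow_Ioi]
    field_simp
  have hF_integrable : ∀ l, IntegrableOn (F l) (Ioi 0) := fun l =>
    (integrableOn_exp_neg_mul_pow_Ioi l).const_mul _
  have hF_summable : Summable fun l => ∫ u in Ioi (0 : ℝ), ‖F l u‖ := by
    refine (summable_pow_div_factorial K).congr fun l => ?_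
    rw [← hF_integral, setIntegral_congr_fun measurableSet_Ioi fun u hu =>
      Real.norm_of_nonneg (hF_nonneg l u hu)]
  calc ∫ u in Ioi (0 : ℝ), exp (-u) * besselI0 (2 * √(K * u))
      = ∫ u in Ioi (0 : ℝ), ∑' l, F l u := by
        refine setIntegral_congr_fun measurableSet_Ioi fun u (hu : 0 < u) => ?_
        rw [besselI0_two_mul_sqrt (by positivity), ← tsum_mul_left]
        congr 1 with l
        ring
    _ = ∑' l, K ^ l / l ! := by
        rw [← integral_tsum_of_summable_integral_norm hF_integrable hF_summable]
        simp only [hF_integral]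
    _ = exp K := by
        rw [exp_eq_exp_ℝ]
        exact (NormedSpace.expSeries_div_hasSum_exp K).tsum_eq

lemma ricianPDF_eq_const_mul (K lam x : ℝ) :
    ricianPDF K lam x = (K + 1) * exp (-K) / lam *
      (exp (-((K + 1) / lam * x)) * besselI0 (2 * √(K * ((K + 1) / lam * x)))) := by
  unfold ricianPDF
  ring_nf

/-- The Rician density is nonnegative on `[0,∞)` and integrates to `1`. -/
theorem stmt1 (K lam : ℝ) (hK : 0 ≤ K) (hlam : 0 < lam) :
    (∀ x : ℝ, 0 ≤ x → 0 ≤ ricianPDF K lam x) ∧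
      ∫ x in Set.Ioi (0 : ℝ), ricianPDF K lam x = 1 := by
  refine ⟨fun x _ => ricianPDF_nonneg (by linarith) hlam.le x, ?_⟩
  have hb : 0 < (K + 1) / lam := by positivity
  simp_rw [ricianPDF_eq_const_mul, integral_const_mul]
  rw [integral_comp_mul_left_Ioi (fun u => exp (-u) * besselI0 (2 * √(K * u))) 0 hb, mul_zero,
    smul_eq_mul, integral_exp_neg_mul_besselI0_two_mul_sqrt hK]
  field_simp
  rw [← exp_add, neg_add_cancel, exp_zero]
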